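/- arXiv:1704.02154 — 5 statements merged into one kernel-verified Lean document; each statement's English description precedes it below -/
import Mathlib

section
/- Kernel behaviors are complete: for every Laurent polynomial matrix R(z) ∈ ℝ[z,z⁻¹]^{p×n} and every w ∈ (ℝⁿ)^ℤ, one has w ∈ ker∞R if and only if for all integers t₁ ≤ t₂ there exists v ∈ ker∞R with v(t) = w(t) for all t ∈ [t₁, t₂]. -/
/-- The shift operator `R(σ)` associated with a Laurent polynomial matrix
`R ∈ ℝ[z,z⁻¹]^{p×n}`: `(R(σ)w)(t)ᵢ = Σⱼ Σ_k coeff_k(Rᵢⱼ) · w(t+k)ⱼ`. -/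
noncomputable def shiftOp {p n : ℕ} (R : Matrix (Fin p) (Fin n) (LaurentPolynomial ℝ))
    (w : ℤ → Fin n → ℝ) : ℤ → Fin p → ℝ :=
  fun t i => ∑ j, Finsupp.sum (R i j).coeff fun k c => c * w (t + k) j

/-- Kernel behaviors are complete: for every Laurent polynomial matrix
`R(z) ∈ ℝ[z,z⁻¹]^{p×n}` and every `w ∈ (ℝⁿ)^ℤ`, one has `w ∈ ker∞R` if and only if for all
integers `t₁ ≤ t₂` there exists `v ∈ ker∞R` with `v(t) = w(t)` for all `t ∈ [t₁, t₂]`. -/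
theorem kernel_behavior_complete (p n : ℕ)
    (R : Matrix (Fin p) (Fin n) (LaurentPolynomial ℝ)) (w : ℤ → Fin n → ℝ) :
    shiftOp R w = 0 ↔
      ∀ t₁ t₂ : ℤ, t₁ ≤ t₂ →
        ∃ v : ℤ → Fin n → ℝ, shiftOp R v = 0 ∧ ∀ t : ℤ, t₁ ≤ t → t ≤ t₂ → v t = w t := by
  constructor
  · intro h t₁ t₂ _
    exact ⟨w, h, fun _ _ _ => rfl⟩
  · intro h
    funext t i
    -- support bound
    set S : Finset ℤ := (Finset.univ : Finset (Fin p)).sup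
      (fun i => (Finset.univ : Finset (Fin n)).sup (fun j => (R i j).coeff.support)) with hS
    set N : ℤ := ((S.sup Int.natAbs : ℕ) : ℤ) with hN
    have hNk : ∀ k ∈ S, k.natAbs ≤ S.sup Int.natAbs := fun k hk => Finset.le_sup hk
    obtain ⟨v, hv, hagree⟩ := h (t - N) (t + N)
      (by have : (0:ℤ) ≤ N := Int.ofNat_nonneg _; linarith)
    have key : (shiftOp R w) t i = (shiftOp R v) t i := by
      simp only [shiftOp]
      refine Finset.sum_congr rfl (fun j _ => ?_)
      refine Finsupp.sum_congr (fun k hk => ?_)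
      have hkS : k ∈ S := by
        rw [hS, Finset.mem_sup]
        exact ⟨i, Finset.mem_univ i, Finset.mem_sup.mpr ⟨j, Finset.mem_univ j, hk⟩⟩
      have habs : |k| ≤ N := by
        rw [hN, Int.abs_eq_natAbs]; exact_mod_cast hNk k hkS
      obtain ⟨h1, h2⟩ := abs_le.mp habs
      rw [hagree (t + k) (by linarith) (by linarith)]
    rw [key, hv]
end

section
/- Every linear, time-invariant, complete behavior admits a kernel representation: if B ⊆ (ℝⁿ)^ℤ is an ℝ-linear subspace satisfying σB = B (where σ is the backward shift) and B is complete (i.e. w ∈ B whenever for all integers t₁ ≤ t₂ there exists v ∈ B with v(t) = w(t) for all t ∈ [t₁,t₂]), then there exist p ∈ ℕ and a Laurent polynomial matrix R(z) ∈ ℝ[z,z⁻¹]^{p×n} such that B = ker∞R. -/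
/-!
Let `N ⊆ ℝ[z,z⁻¹]ⁿ` be the module of rows `r` with `r(σ)v = 0` for every `v ∈ B`. Since
`ℝ[z,z⁻¹]` is Noetherian, `N` is finitely generated, and its generators are the rows of `R`;
then `B ⊆ ker∞R`, and `w ∈ ker∞R` means that every row annihilating `B` annihilates `w`.
For such a `w` and a window `[t₁, t₂]`, if `w|[t₁,t₂]` were not the restriction of some `v ∈ B`,
a linear functional on the finite-dimensional window space would vanish on `B|[t₁,t₂]` but not
on `w|[t₁,t₂]`. Read as a row supported in `[t₁, t₂]`, it annihilates `B` because `B` is shift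
invariant, yet not `w`. So `w` agrees with elements of `B` on every window, and `w ∈ B` by
completeness.
-/

open LaurentPolynomial

instance LaurentPolynomial.isNoetherianRing {R : Type*} [CommRing R] [IsNoetherianRing R] :
    IsNoetherianRing R[T;T⁻¹] :=
  IsLocalization.isNoetherianRing (Submonoid.powers (Polynomial.X : Polynomial R)) _
    Polynomial.isNoetherianRing

theorem shift_mem_of_image_shift_eq {α : Type*} {B : Set (ℤ → α)}
    (hB : (fun w t => w (t + 1)) '' B = B) {w : ℤ → α} (hw : w ∈ B) (τ : ℤ) :
    (fun t => w (t + τ)) ∈ B := by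
  induction τ using Int.induction_on with
  | zero => simpa using hw
  | succ k ih =>
    have h := hB ▸ Set.mem_image_of_mem (fun (v : ℤ → α) t => v (t + 1)) ih
    simpa only [add_assoc, add_comm (1 : ℤ)] using h
  | pred k ih =>
    obtain ⟨u, hu, hsh⟩ := hB.symm ▸ ih
    convert hu using 1
    funext t
    have h := congrFun hsh (t - 1)
    simp only [sub_add_cancel] at h
    rw [h]
    ring_nf

namespace LaurentPolynomial

variable (R : Type*) [CommSemiring R]

noncomputable def shiftHom : Multiplicative ℤ →* Module.End R (ℤ → R) where
  toFun k := LinearMap.funLeft R R (· + k.toAdd)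
  map_one' := by ext; simp
  map_mul' a b := by ext; simp [add_assoc]

noncomputable def shiftAlgHom : R[T;T⁻¹] →ₐ[R] Module.End R (ℤ → R) :=
  AddMonoidAlgebra.lift R (Module.End R (ℤ → R)) ℤ (shiftHom R)

variable {R}

theorem shiftAlgHom_apply (q : R[T;T⁻¹]) (x : ℤ → R) (t : ℤ) :
    shiftAlgHom R q x t = q.coeff.sum fun k c => c * x (t + k) := by
  simp [shiftAlgHom, AddMonoidAlgebra.lift_apply, Finsupp.sum, shiftHom]

theorem shiftAlgHom_C_mul_T (a : R) (k : ℤ) (x : ℤ → R) (t : ℤ) :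
    shiftAlgHom R (C a * T k) x t = a * x (t + k) := by
  simp [← single_eq_C_mul_T, shiftAlgHom_apply]

end LaurentPolynomial

namespace Behavior

section CommSemiring

variable {R : Type*} [CommSemiring R] {ι : Type*} [Fintype ι]

noncomputable def rowShiftOp (r : ι → R[T;T⁻¹]) (w : ℤ → ι → R) : ℤ → R :=
  ∑ j, shiftAlgHom R (r j) fun t => w t j

theorem rowShiftOp_add (r s : ι → R[T;T⁻¹]) (w : ℤ → ι → R) :
    rowShiftOp (r + s) w = rowShiftOp r w + rowShiftOp s w := by
  simp [rowShiftOp, Finset.sum_add_distrib]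

theorem rowShiftOp_smul (q : R[T;T⁻¹]) (r : ι → R[T;T⁻¹]) (w : ℤ → ι → R) :
    rowShiftOp (q • r) w = shiftAlgHom R q (rowShiftOp r w) := by
  simp [rowShiftOp, map_sum]

noncomputable def annihilator (S : Set (ℤ → ι → R)) : Submodule R[T;T⁻¹] (ι → R[T;T⁻¹]) where
  carrier := {r | ∀ w ∈ S, rowShiftOp r w = 0}
  zero_mem' w _ := by simp [rowShiftOp]
  add_mem' hr hs w hw := by rw [rowShiftOp_add, hr w hw, hs w hw, add_zero]
  smul_mem' q r hr w hw := by rw [rowShiftOp_smul, hr w hw, map_zero]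

theorem mem_annihilator {S : Set (ℤ → ι → R)} {r : ι → R[T;T⁻¹]} :
    r ∈ annihilator S ↔ ∀ w ∈ S, rowShiftOp r w = 0 := Iff.rfl

def window (s : Finset ℤ) : (ℤ → ι → R) →ₗ[R] (s × ι → R) where
  toFun w x := w x.1 x.2
  map_add' _ _ := rfl
  map_smul' _ _ := rfl

theorem exists_rowShiftOp_eq_dual (s : Finset ℤ) (f : Module.Dual R (s × ι → R)) :
    ∃ r : ι → R[T;T⁻¹], ∀ w t, rowShiftOp r w t = f (window s fun u => w (u + t)) := by
  classical
  set c : s → ι → R := fun k j => f fun x => if (k, j) = x then 1 else 0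
  refine ⟨fun j => ∑ k : s, C (c k j) * T k, fun w t => ?_⟩
  rw [LinearMap.pi_apply_eq_sum_univ f, Fintype.sum_prod_type, Finset.sum_comm]
  simp only [rowShiftOp, map_sum, Finset.sum_apply, LinearMap.sum_apply, shiftAlgHom_C_mul_T]
  refine Finset.sum_congr rfl fun j _ => Finset.sum_congr rfl fun k _ => ?_
  simp [window, smul_eq_mul, mul_comm, add_comm, c]

end CommSemiring

theorem exists_mem_eqOn_of_annihilator_le {K : Type*} [Field K] {ι : Type*} [Fintype ι]
    {B : Submodule K (ℤ → ι → K)} (hB : ∀ v ∈ B, ∀ τ : ℤ, (fun t => v (t + τ)) ∈ B)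
    {w : ℤ → ι → K} (hw : annihilator (B : Set (ℤ → ι → K)) ≤ annihilator {w})
    (s : Finset ℤ) : ∃ v ∈ B, Set.EqOn v w s := by
  by_contra! hne
  have hw_notMem : window s w ∉ B.map (window s) := by
    rintro ⟨v, hv, hvw⟩
    exact hne v hv fun t ht => funext fun j => congrFun hvw (⟨t, ht⟩, j)
  obtain ⟨f, hfw, hfB⟩ := Submodule.exists_dual_map_eq_bot_of_notMem hw_notMem inferInstance
  obtain ⟨r, hr⟩ := exists_rowShiftOp_eq_dual s f
  have hrB : r ∈ annihilator (B : Set (ℤ → ι → K)) := fun v hv => funext fun t => by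
    rw [hr]
    exact LinearMap.le_ker_iff_map.mpr hfB (Submodule.mem_map_of_mem (hB v hv t))
  have hrw := congrFun (hw hrB w rfl) 0
  simp only [hr, add_zero, Pi.zero_apply] at hrw
  exact hfw hrw

end Behavior

open Behavior

theorem shiftOp_eq_zero_iff {p n : ℕ} (R : Matrix (Fin p) (Fin n) ℝ[T;T⁻¹])
    (w : ℤ → Fin n → ℝ) : shiftOp R w = 0 ↔ ∀ i, rowShiftOp (R i) w = 0 := by
  simp only [funext_iff, shiftOp, rowShiftOp, Finset.sum_apply, shiftAlgHom_apply, Pi.zero_apply]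
  exact forall_comm

/-- Every linear, time-invariant, complete behavior admits a kernel
representation: if `B ⊆ (ℝⁿ)^ℤ` is an ℝ-linear subspace satisfying `σB = B` (where `σ` is the
backward shift) and `B` is complete (i.e. `w ∈ B` whenever for all integers `t₁ ≤ t₂` there
exists `v ∈ B` with `v(t) = w(t)` for all `t ∈ [t₁,t₂]`), then there exist `p ∈ ℕ` and a
Laurent polynomial matrix `R(z) ∈ ℝ[z,z⁻¹]^{p×n}` such that `B = ker∞R`. -/
theorem complete_LTI_behavior_has_kernel_representation (n : ℕ)
    (B : Submodule ℝ (ℤ → Fin n → ℝ))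
    (hshift : (fun w : ℤ → Fin n → ℝ => fun t => w (t + 1)) '' (B : Set (ℤ → Fin n → ℝ))
      = (B : Set (ℤ → Fin n → ℝ)))
    (hcomplete : ∀ w : ℤ → Fin n → ℝ,
      (∀ t₁ t₂ : ℤ, t₁ ≤ t₂ → ∃ v ∈ B, ∀ t : ℤ, t₁ ≤ t → t ≤ t₂ → v t = w t) → w ∈ B) :
    ∃ (p : ℕ) (R : Matrix (Fin p) (Fin n) (LaurentPolynomial ℝ)),
      (B : Set (ℤ → Fin n → ℝ)) = {w : ℤ → Fin n → ℝ | shiftOp R w = 0} := by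
  obtain ⟨p, R, hR⟩ := Submodule.fg_iff_exists_fin_generating_family.mp
    (IsNoetherian.noetherian (annihilator (B : Set (ℤ → Fin n → ℝ))))
  have hker (w : ℤ → Fin n → ℝ) :
      shiftOp R w = 0 ↔ annihilator (B : Set (ℤ → Fin n → ℝ)) ≤ annihilator {w} := by
    refine (shiftOp_eq_zero_iff R w).trans ?_
    rw [← hR, Submodule.span_le, Set.range_subset_iff]
    simp [mem_annihilator]
  refine ⟨p, R, Set.ext fun w => ⟨fun hw => (hker w).mpr ?_, fun hw => hcomplete w ?_⟩⟩
  · exact fun r hr v hv => hr v (Set.mem_singleton_iff.mp hv ▸ hw)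
  · intro t₁ t₂ _
    obtain ⟨v, hv, hvw⟩ := exists_mem_eqOn_of_annihilator_le
      (fun v hv => shift_mem_of_image_shift_eq hshift hv) ((hker w).mp hw) (Finset.Icc t₁ t₂)
    exact ⟨v, hv, fun t h₁ h₂ => hvw (Finset.mem_Icc.mpr ⟨h₁, h₂⟩)⟩
end

section
/- For a Laurent polynomial matrix R(z) ∈ ℝ[z,z⁻¹]^{p×n}, the shift operator R(σ) : (ℝⁿ)^ℤ → (ℝᵖ)^ℤ is surjective if and only if R has full row normal rank, i.e. the rank of R over the field of fractions of ℝ[z,z⁻¹] equals p. -/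
/-- The normal rank of a Laurent polynomial matrix: its rank as a matrix over the field of
fractions of `ℝ[z,z⁻¹]`. -/
noncomputable def normalRank {m : Type*} [Fintype m] {n : ℕ}
    (R : Matrix m (Fin n) (LaurentPolynomial ℝ)) : ℕ :=
  Matrix.rank (R.map (algebraMap (LaurentPolynomial ℝ) (FractionRing (LaurentPolynomial ℝ))))

noncomputable def act (d : LaurentPolynomial ℝ) (w : ℤ → ℝ) : ℤ → ℝ :=
  fun t => Finsupp.sum d.coeff fun k c => c * w (t + k)

theorem act_zero (w : ℤ → ℝ) : act 0 w = 0 := by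
  funext t; simp [act]

theorem act_apply (d : LaurentPolynomial ℝ) (w : ℤ → ℝ) (t : ℤ) :
    act d w t = ∑ k ∈ d.coeff.support, d.coeff k * w (t + k) := rfl

/-- act as an additive hom in the polynomial. -/
noncomputable def actHom (w : ℤ → ℝ) (t : ℤ) : LaurentPolynomial ℝ →+ ℝ where
  toFun d := act d w t
  map_zero' := by simp [act]
  map_add' a b := by
    simp only [act]
    rw [AddMonoidAlgebra.coeff_add, Finsupp.sum_add_index (by simp) (by intros; ring)]

theorem act_single (k : ℤ) (c : ℝ) (w : ℤ → ℝ) (t : ℤ) :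
    act (AddMonoidAlgebra.single k c) w t = c * w (t + k) := by
  show Finsupp.sum (Finsupp.single k c) (fun k c => c * w (t + k)) = _
  rw [Finsupp.sum_single_index (by simp)]

theorem act_mul (a b : LaurentPolynomial ℝ) (w : ℤ → ℝ) :
    act (a * b) w = act a (act b w) := by
  funext t
  calc act (a * b) w t
      = actHom w t (a * b) := rfl
    _ = Finsupp.sum a.coeff fun k1 c1 => Finsupp.sum b.coeff fun k2 c2 => (c1 * c2) * w (t + (k1 + k2)) := by
        rw [AddMonoidAlgebra.mul_def, map_finsuppSum]
        refine Finsupp.sum_congr fun k1 _ => ?_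
        rw [map_finsuppSum]
        refine Finsupp.sum_congr fun k2 _ => ?_
        exact act_single (k1 + k2) _ w t
    _ = Finsupp.sum a.coeff fun k1 c1 => c1 * act b w (t + k1) := by
        refine Finsupp.sum_congr fun k1 _ => ?_
        rw [act, Finsupp.mul_sum]
        refine Finsupp.sum_congr fun k2 _ => ?_
        rw [add_assoc, mul_assoc]
    _ = act a (act b w) t := rfl

theorem act_w_add (d : LaurentPolynomial ℝ) (w w' : ℤ → ℝ) :
    act d (w + w') = act d w + act d w' := by
  funext t
  simp only [act, Pi.add_apply, mul_add]
  exact Finsupp.sum_add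

theorem act_w_zero (d : LaurentPolynomial ℝ) : act d 0 = 0 := by
  funext t; simp [act]

theorem act_w_sum {ι : Type*} (d : LaurentPolynomial ℝ) (S : Finset ι) (f : ι → ℤ → ℝ) (t : ℤ) :
    act d (fun s => ∑ j ∈ S, f j s) t = ∑ j ∈ S, act d (f j) t := by
  simp only [act_apply, Finset.mul_sum]
  exact Finset.sum_comm

noncomputable def solveF (d : ℤ →₀ ℝ) (L : ℤ) (hL : ∀ k ∈ d.support, k ≤ L) (v : ℤ → ℝ) :
    ℕ → ℝ
  | m => (v m - ∑ k ∈ (d.support.erase L).attach,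
      d k.1 * (if h : L ≤ (m : ℤ) + k.1 then
        solveF d L hL v ((m : ℤ) + k.1 - L).toNat else 0)) / d L
  termination_by m => m
  decreasing_by
    have h1 := hL k.1 (Finset.mem_of_mem_erase k.2)
    have h2 : k.1 ≠ L := Finset.ne_of_mem_erase k.2
    omega

theorem act_surj_half (d : LaurentPolynomial ℝ) (hd : d ≠ 0) (v : ℤ → ℝ)
    (hv : ∀ t < 0, v t = 0) : ∃ u, act d u = v := by
  have hne : d.coeff.support.Nonempty := Finsupp.support_nonempty_iff.mpr (mt AddMonoidAlgebra.coeff_eq_zero.mp hd)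
  set L : ℤ := d.coeff.support.max' hne with hLdef
  have hL : ∀ k ∈ d.coeff.support, k ≤ L := fun k hk => Finset.le_max' _ k hk
  have hdL : d.coeff L ≠ 0 := Finsupp.mem_support_iff.mp (d.coeff.support.max'_mem hne)
  set f : ℕ → ℝ := solveF d.coeff L hL v with hf
  refine ⟨fun s => if L ≤ s then f (s - L).toNat else 0, ?_⟩
  funext t
  set u : ℤ → ℝ := fun s => if L ≤ s then f (s - L).toNat else 0 with hu
  rw [act_apply]
  rcases le_or_gt 0 t with ht | ht
  · -- main case
    rw [← Finset.add_sum_erase _ _ (d.coeff.support.max'_mem hne)]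
    have hus : ∀ s, u s = if L ≤ s then f (s - L).toNat else 0 := fun s => rfl
    have hu1 : u (t + L) = f t.toNat := by
      rw [hus, if_pos (by omega)]
      congr 1
      omega
    have hsum : ∑ k ∈ d.coeff.support.erase L, d.coeff k * u (t + k)
        = ∑ k ∈ (d.coeff.support.erase L).attach,
            d.coeff k.1 * (if h : L ≤ (t.toNat : ℤ) + k.1 then
              f ((t.toNat : ℤ) + k.1 - L).toNat else 0) := by
      rw [Finset.sum_attach (d.coeff.support.erase L)
        (fun k => d.coeff k * (if h : L ≤ (t.toNat : ℤ) + k then f ((t.toNat : ℤ) + k - L).toNat else 0))]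
      refine Finset.sum_congr rfl fun k hk => ?_
      have htt : (t.toNat : ℤ) = t := Int.toNat_of_nonneg ht
      rw [htt, hus]
      by_cases h : L ≤ t + k
      · rw [if_pos h, dif_pos h]
      · rw [if_neg h, dif_neg h]
    rw [hu1, hsum]
    conv_lhs => rw [hf, solveF]
    have htt : (t.toNat : ℤ) = t := Int.toNat_of_nonneg ht
    rw [htt]
    field_simp
    rw [← hLdef]
    ring
  · -- t < 0 : all terms vanish
    have : ∀ k ∈ d.coeff.support, d.coeff k * u (t + k) = 0 := by
      intro k hk
      have : ¬ L ≤ t + k := by have := hL k hk; omega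
      simp [hu, this]
    rw [Finset.sum_congr rfl this]
    simp [hv t ht]

theorem act_surjective (d : LaurentPolynomial ℝ) (hd : d ≠ 0) : Function.Surjective (act d) := by
  intro v
  set v₁ : ℤ → ℝ := fun t => if 0 ≤ t then v t else 0 with hv₁
  set v₂ : ℤ → ℝ := fun t => if 0 ≤ t then 0 else v t with hv₂
  obtain ⟨u₁, h₁⟩ := act_surj_half d hd v₁ (fun t ht => by simp [hv₁]; omega)
  -- reversed polynomial
  set e : ℤ ↪ ℤ := ⟨fun k => -k, neg_injective⟩ with he
  set d' : LaurentPolynomial ℝ := AddMonoidAlgebra.ofCoeff (Finsupp.embDomain e d.coeff) with hd'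
  have hd'0 : d' ≠ 0 := fun h => hd (AddMonoidAlgebra.coeff_eq_zero.mp (Finsupp.embDomain_eq_zero.mp (show Finsupp.embDomain e d.coeff = 0 from congrArg AddMonoidAlgebra.coeff h)))
  obtain ⟨u, h₂⟩ := act_surj_half d' hd'0 (fun t => v₂ (-t)) (by
    intro t ht
    simp only [hv₂]
    rw [if_pos (by omega)])
  have key : ∀ u₂ t, act d (fun s => u₂ (-s)) t = act d' u₂ (-t) := by
    intro u₂ t
    show (Finsupp.sum d.coeff fun k c => c * u₂ (-(t + k)))
        = Finsupp.sum (Finsupp.embDomain e d.coeff) fun k c => c * u₂ (-t + k)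
    rw [Finsupp.sum_embDomain]
    refine Finsupp.sum_congr fun k _ => ?_
    show _ = _ * u₂ (-t + e k)
    have : -(t + k) = -t + e k := by simp [he]; ring
    rw [this]
  refine ⟨u₁ + (fun s => u (-s)), ?_⟩
  rw [act_w_add, h₁]
  funext t
  have : act d (fun s => u (-s)) t = v₂ t := by
    rw [key, h₂]
    simp
  rw [Pi.add_apply, this]
  simp only [hv₁, hv₂, Pi.add_apply]
  split <;> simp

theorem shiftOp_apply {p n : ℕ} (R : Matrix (Fin p) (Fin n) (LaurentPolynomial ℝ))
    (w : ℤ → Fin n → ℝ) (t : ℤ) (i : Fin p) :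
    shiftOp R w t i = ∑ j, act (R i j) (fun s => w s j) t := rfl

theorem shiftOp_mul {p m n : ℕ} (M : Matrix (Fin p) (Fin m) (LaurentPolynomial ℝ))
    (N : Matrix (Fin m) (Fin n) (LaurentPolynomial ℝ)) (w : ℤ → Fin n → ℝ) :
    shiftOp (M * N) w = shiftOp M (shiftOp N w) := by
  funext t i
  rw [shiftOp_apply, shiftOp_apply]
  calc ∑ j, act ((M * N) i j) (fun s => w s j) t
      = ∑ j, ∑ m', act (M i m' * N m' j) (fun s => w s j) t := by
        refine Finset.sum_congr rfl fun j _ => ?_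
        have : (M * N) i j = ∑ m', M i m' * N m' j := Matrix.mul_apply
        rw [this]
        exact map_sum (actHom (fun s => w s j) t) (fun m' => M i m' * N m' j) Finset.univ
    _ = ∑ m', ∑ j, act (M i m') (act (N m' j) (fun s => w s j)) t := by
        rw [Finset.sum_comm]
        exact Finset.sum_congr rfl fun m' _ => Finset.sum_congr rfl fun j _ => by
          rw [act_mul]
    _ = ∑ m', act (M i m') (fun s => shiftOp N w s m') t := by
        refine Finset.sum_congr rfl fun m' _ => ?_
        rw [← act_w_sum]
        rfl

theorem shiftOp_zero {p n : ℕ} (w : ℤ → Fin n → ℝ) :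
    shiftOp (0 : Matrix (Fin p) (Fin n) (LaurentPolynomial ℝ)) w = 0 := by
  funext t i
  rw [shiftOp_apply]
  simp [act_zero]

theorem shiftOp_smul_one {p : ℕ} (b : LaurentPolynomial ℝ) (u : ℤ → Fin p → ℝ) (t : ℤ)
    (i : Fin p) :
    shiftOp (b • (1 : Matrix (Fin p) (Fin p) (LaurentPolynomial ℝ))) u t i
      = act b (fun s => u s i) t := by
  rw [shiftOp_apply]
  rw [Finset.sum_eq_single i]
  · congr 1
    simp [Matrix.smul_apply, Matrix.one_apply]
  · intro j _ hj
    have : (b • (1 : Matrix (Fin p) (Fin p) (LaurentPolynomial ℝ))) i j = 0 := by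
      simp [Matrix.smul_apply, Matrix.one_apply, (Ne.symm hj)]
    rw [this, act_zero]
    rfl
  · simp

noncomputable instance : IsDomain (LaurentPolynomial ℝ) := NoZeroDivisors.to_isDomain _

abbrev LP := LaurentPolynomial ℝ
abbrev KK := FractionRing (LaurentPolynomial ℝ)
noncomputable abbrev φ : LP →+* KK := algebraMap _ _

theorem φinj : Function.Injective φ := IsFractionRing.injective LP KK

theorem surj_of_rank (p n : ℕ) (R : Matrix (Fin p) (Fin n) LP)
    (h : normalRank R = p) : Function.Surjective (shiftOp R) := by
  -- full row rank over K gives a right inverse over K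
  have hrange : LinearMap.range (R.map φ).mulVecLin = ⊤ := by
    apply Submodule.eq_top_of_finrank_eq
    rw [show Module.finrank KK ↥(LinearMap.range (Matrix.mulVecLin (R.map φ))) = normalRank R from rfl, h]
    simp [Module.finrank_pi]
  have hsurj : Function.Surjective (R.map φ).mulVec := by
    intro y
    obtain ⟨x, hx⟩ := hrange ▸ Submodule.mem_top (x := y)
    exact ⟨x, hx⟩
  obtain ⟨B, hB⟩ := Matrix.mulVec_surjective_iff_exists_right_inverse.mp hsurj
  -- clear denominators
  obtain ⟨b, hb⟩ := IsLocalization.exist_integer_multiples_of_finite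
    (nonZeroDivisors LP) (fun x : Fin n × Fin p => B x.1 x.2)
  choose B' hB' using fun x : Fin n × Fin p => hb x
  set B'' : Matrix (Fin n) (Fin p) LP := fun j i => B' (j, i) with hB''
  have hbz : (b : LP) ≠ 0 := nonZeroDivisors.coe_ne_zero b
  have hRB : R * B'' = (b : LP) • (1 : Matrix (Fin p) (Fin p) LP) := by
    refine Matrix.ext fun i j => ?_
    apply φinj
    have : φ ((R * B'') i j) = ∑ m, φ (R i m) * φ (B'' m j) := by
      rw [Matrix.mul_apply, map_sum]
      exact Finset.sum_congr rfl fun m _ => map_mul _ _ _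
    rw [this]
    have h2 : ∀ m, φ (B'' m j) = φ b * B m j := by
      intro m
      have := hB' (m, j)
      rwa [Algebra.smul_def] at this
    rw [Finset.sum_congr rfl fun m _ => by rw [h2 m]]
    have : ∑ m, φ (R i m) * (φ ↑b * B m j) = φ b * ∑ m, (R.map φ) i m * B m j := by
      rw [Finset.mul_sum]
      exact Finset.sum_congr rfl fun m _ => by rw [Matrix.map_apply]; ring
    rw [this, show ∑ m, (R.map φ) i m * B m j = ((R.map φ) * B) i j from (Matrix.mul_apply).symm, hB]
    simp [Matrix.smul_apply, Matrix.one_apply, apply_ite φ]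
  -- now conclude
  intro v
  have hact := act_surjective (b : LP) hbz
  choose uu huu using fun i : Fin p => hact (fun t => v t i)
  set u : ℤ → Fin p → ℝ := fun t i => uu i t with hu
  refine ⟨shiftOp B'' u, ?_⟩
  rw [← shiftOp_mul, hRB]
  funext t i
  rw [shiftOp_smul_one]
  have : act (↑b) (fun s => u s i) = act ↑b (uu i) := rfl
  rw [this, huu]

open Matrix in
theorem rank_of_surj (p n : ℕ) (R : Matrix (Fin p) (Fin n) LP)
    (hs : Function.Surjective (shiftOp R)) : normalRank R = p := by
  by_contra hne
  have hlt : normalRank R < p := by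
    have := Matrix.rank_le_card_height (R.map φ)
    simp only [Fintype.card_fin] at this
    exact lt_of_le_of_ne this hne
  -- find a nonzero left kernel vector over K
  set M : Matrix (Fin p) (Fin n) KK := R.map φ with hM
  have hker : ∃ g : Fin p → KK, g ≠ 0 ∧ Matrix.vecMul g M = 0 := by
    have hrt : (Mᵀ).rank < p := by
      rw [Matrix.rank_transpose]
      exact hlt
    have hrn := LinearMap.finrank_range_add_finrank_ker (Mᵀ).mulVecLin
    rw [Module.finrank_pi] at hrn
    simp only [Fintype.card_fin] at hrn
    have : 0 < Module.finrank KK ↥(LinearMap.ker (Mᵀ).mulVecLin) := by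
      have : Matrix.rank Mᵀ = Module.finrank KK ↥(LinearMap.range (Mᵀ).mulVecLin) := rfl
      omega
    have hbot : LinearMap.ker (Mᵀ).mulVecLin ≠ ⊥ := by
      intro hb
      rw [hb, finrank_bot] at this
      omega
    obtain ⟨g, hg, hgne⟩ := Submodule.ne_bot_iff _ |>.mp hbot
    refine ⟨g, hgne, ?_⟩
    rw [← Matrix.mulVec_transpose]
    exact hg
  obtain ⟨g, hg0, hgM⟩ := hker
  -- clear denominators
  obtain ⟨b, hb⟩ := IsLocalization.exist_integer_multiples_of_finite (nonZeroDivisors LP) g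
  choose g' hg' using fun i => hb i
  have hbz : φ (b : LP) ≠ 0 := fun h => nonZeroDivisors.coe_ne_zero b (φinj (by rw [map_zero]; exact h))
  have hg'0 : ∃ i, g' i ≠ 0 := by
    obtain ⟨i, hi⟩ := Function.ne_iff.mp hg0
    refine ⟨i, fun h => hi ?_⟩
    have h2 : (0:KK) = φ ↑b * g i := by
      rw [← map_zero φ, ← h, hg' i, Algebra.smul_def]
    rcases mul_eq_zero.mp h2.symm with h1 | h1
    · exact absurd h1 hbz
    · exact h1
  obtain ⟨i₀, hi₀⟩ := hg'0
  -- relation over LP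
  have hrel : ∀ j, ∑ i, g' i * R i j = 0 := by
    intro j
    apply φinj
    rw [map_sum, map_zero]
    have : ∀ i, φ (g' i * R i j) = φ ↑b * (g i * M i j) := by
      intro i
      rw [_root_.map_mul, hg' i, Algebra.smul_def, hM, Matrix.map_apply]
      ring
    rw [Finset.sum_congr rfl fun i _ => this i, ← Finset.mul_sum]
    have : ∑ i, g i * M i j = Matrix.vecMul g M j := rfl
    rw [this, hgM]
    simp
  -- counterexample
  set G : Matrix (Fin 1) (Fin p) LP := fun _ i => g' i with hGdef
  have hGR : G * R = 0 := by
    refine Matrix.ext fun x j => ?_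
    rw [Matrix.mul_apply]
    simpa using hrel j
  have hk : (g' i₀).coeff.support.Nonempty := Finsupp.support_nonempty_iff.mpr (mt AddMonoidAlgebra.coeff_eq_zero.mp hi₀)
  set k₀ : ℤ := hk.choose with hk₀
  have hk₀mem : k₀ ∈ (g' i₀).coeff.support := hk.choose_spec
  set v : ℤ → Fin p → ℝ := fun t i => if i = i₀ ∧ t = k₀ then 1 else 0 with hv
  obtain ⟨w, hw⟩ := hs v
  have h1 : shiftOp G v = 0 := by
    rw [← hw, ← shiftOp_mul, hGR, shiftOp_zero]
  have h2 : shiftOp G v 0 0 = (g' i₀).coeff k₀ := by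
    rw [shiftOp_apply]
    rw [Finset.sum_eq_single i₀]
    · have : (fun s => v s i₀) = fun s => if s = k₀ then (1:ℝ) else 0 := by
        funext s; simp [hv]
      rw [show G 0 i₀ = g' i₀ from rfl, this, act_apply]
      rw [Finset.sum_eq_single k₀]
      · simp
      · intro k hkmem hkne
        rw [if_neg (by omega)]
        ring
      · intro h
        exact absurd hk₀mem h
    · intro j _ hj
      have : (fun s => v s j) = (0 : ℤ → ℝ) := by
        funext s
        simp [hv, hj]
      rw [this]
      have := act_w_zero (G 0 j)
      rw [this]
      rfl
    · simp
  rw [h1] at h2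
  exact Finsupp.mem_support_iff.mp hk₀mem h2.symm

/-- For a Laurent polynomial matrix `R(z) ∈ ℝ[z,z⁻¹]^{p×n}`, the shift operator
`R(σ) : (ℝⁿ)^ℤ → (ℝᵖ)^ℤ` is surjective if and only if `R` has full row normal rank, i.e. the
rank of `R` over the field of fractions of `ℝ[z,z⁻¹]` equals `p`. -/
theorem shiftOp_surjective_iff_full_row_normal_rank (p n : ℕ)
    (R : Matrix (Fin p) (Fin n) (LaurentPolynomial ℝ)) :
    Function.Surjective (shiftOp R) ↔ normalRank R = p :=
  ⟨rank_of_surj p n R, surj_of_rank p n R⟩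
end

section
/- If R(z) ∈ ℝ[z,z⁻¹]^{m×n} has full row normal rank m, then the map induced by R(σ) on the quotient, R̄ : (ℝⁿ)^ℤ / ker∞R → (ℝᵐ)^ℤ, sending the coset of w to R(σ)w, is a well-defined ℝ-linear continuous bijection which is moreover a Borel isomorphism: both R̄ and its inverse are measurable with respect to the Borel σ-algebras of the quotient topology on (ℝⁿ)^ℤ / ker∞R and of the product topology on (ℝᵐ)^ℤ. -/
/-- The shift operator `R(σ)` associated with a Laurent polynomial matrix
`R ∈ ℝ[z,z⁻¹]^{m×n}`, bundled as an ℝ-linear map: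
`(R(σ)w)(t)ᵢ = Σⱼ Σ_k coeff_k(Rᵢⱼ) · w(t+k)ⱼ`. -/
noncomputable def shiftOpL {p n : ℕ} (R : Matrix (Fin p) (Fin n) (LaurentPolynomial ℝ)) :
    (ℤ → Fin n → ℝ) →ₗ[ℝ] (ℤ → Fin p → ℝ) where
  toFun w := fun t i => ∑ j, Finsupp.sum (R i j).coeff fun k c => c * w (t + k) j
  map_add' w w' := by
    funext t i
    simp only [Pi.add_apply, mul_add]
    rw [← Finset.sum_add_distrib]
    exact Finset.sum_congr rfl fun j _ => Finsupp.sum_add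
  map_smul' a w := by
    funext t i
    simp only [Pi.smul_apply, smul_eq_mul, RingHom.id_apply]
    rw [Finset.mul_sum]
    refine Finset.sum_congr rfl fun j _ => ?_
    rw [Finsupp.mul_sum]
    exact Finsupp.sum_congr fun k _ => by ring

/-!
Identify `(ℝⁿ)^ℤ` with the algebraic dual of `ℝ[z,z⁻¹]ⁿ` by evaluating a functional on the
monomials `z^t eⱼ`. Under this identification `R(σ)` is the transpose of the map `φ ↦ φ R` on
row vectors `ℝ[z,z⁻¹]ᵐ → ℝ[z,z⁻¹]ⁿ`. Full row normal rank makes `φ ↦ φ R` injective, and the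
transpose of an injective linear map of vector spaces is surjective, so `R(σ)` is onto and induces
a continuous linear bijection on the quotient by its kernel. Its inverse is Borel because `R(σ)`
is a continuous surjection out of a Polish space, and by Souslin's theorem a set whose preimage
under such a map is Borel is itself Borel.
-/

open Function LaurentPolynomial

namespace LaurentPolynomial

variable {R : Type*} [CommSemiring R] {ι : Type*} [DecidableEq ι]

noncomputable def dualCoeffs (χ : Module.Dual R (ι → R[T;T⁻¹])) : ℤ → ι → R :=
  fun t j => χ (Pi.single j (T t))

theorem dualCoeffs_surjective [Fintype ι] :
    Surjective (dualCoeffs : Module.Dual R (ι → R[T;T⁻¹]) → ℤ → ι → R) := by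
  intro u
  let b := Pi.basis fun _ : ι => AddMonoidAlgebra.basis ℤ R
  refine ⟨b.constr R fun p => u p.2 p.1, funext fun t => funext fun j => ?_⟩
  have := b.constr_basis R (fun p => u p.2 p.1) ⟨j, t⟩
  rwa [Pi.basis_apply] at this

theorem T_mul_eq_sum_coeff (t : ℤ) (p : R[T;T⁻¹]) :
    T t * p = p.coeff.sum fun k c => c • T (t + k) := by
  conv_lhs => rw [← AddMonoidAlgebra.sum_coeff_single p]
  rw [Finsupp.mul_sum]
  refine Finsupp.sum_congr fun k _ => ?_
  rw [T, T, AddMonoidAlgebra.single_mul_single, AddMonoidAlgebra.smul_single, one_mul,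
    smul_eq_mul, mul_one]

end LaurentPolynomial

theorem Matrix.vecMul_injective_of_rank_map_eq_card {A K : Type*} [CommRing A] [Field K]
    [Algebra A K] [IsFractionRing A K] {m n : Type*} [Fintype m] [Fintype n] (M : Matrix m n A)
    (hM : (M.map (algebraMap A K)).rank = Fintype.card m) : Injective M.vecMul := by
  have hK : Injective (M.map (algebraMap A K)).vecMul := by
    rw [Matrix.vecMul_injective_iff, linearIndependent_iff_card_eq_finrank_span, ← hM,
      Matrix.rank_eq_finrank_span_row]
    rfl
  intro φ ψ h
  have hmap : algebraMap A K ∘ φ = algebraMap A K ∘ ψ := by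
    refine hK (funext fun j => ?_)
    dsimp only at h ⊢
    rw [← RingHom.map_vecMul, ← RingHom.map_vecMul, h]
  exact funext fun i => IsFractionRing.injective A K (congrFun hmap i)

theorem shiftOpL_dualCoeffs {p n : ℕ} (R : Matrix (Fin p) (Fin n) ℝ[T;T⁻¹])
    (χ : Module.Dual ℝ (Fin n → ℝ[T;T⁻¹])) :
    shiftOpL R (dualCoeffs χ) = dualCoeffs (χ ∘ₗ (Matrix.vecMulLinear R).restrictScalars ℝ) := by
  funext t i
  have hrow : Matrix.vecMul (Pi.single i (T t)) R = ∑ j, Pi.single j (T t * R i j) := by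
    rw [Matrix.single_vecMul, ← Finset.univ_sum_single (T t • R.row i)]
    rfl
  simp only [shiftOpL, LinearMap.coe_mk, AddHom.coe_mk, dualCoeffs, LinearMap.comp_apply,
    LinearMap.restrictScalars_apply, Matrix.coe_vecMulLinear, hrow, map_sum]
  refine Finset.sum_congr rfl fun j _ => ?_
  let ψ : Module.Dual ℝ ℝ[T;T⁻¹] := χ ∘ₗ LinearMap.single ℝ (fun _ : Fin n => ℝ[T;T⁻¹]) j
  change ((R i j).coeff.sum fun k c => c * ψ (T (t + k))) = ψ (T t * R i j)
  simp only [T_mul_eq_sum_coeff, map_finsuppSum, map_smul, smul_eq_mul]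

theorem shiftOpL_surjective {m n : ℕ} (R : Matrix (Fin m) (Fin n) ℝ[T;T⁻¹])
    (hR : normalRank R = m) : Surjective (shiftOpL R) := by
  have hinj : Injective ((Matrix.vecMulLinear R).restrictScalars ℝ) := by
    refine Matrix.vecMul_injective_of_rank_map_eq_card (K := FractionRing ℝ[T;T⁻¹]) R ?_
    rwa [Fintype.card_fin]
  intro f
  obtain ⟨ψ, rfl⟩ := dualCoeffs_surjective f
  obtain ⟨χ, rfl⟩ := LinearMap.dualMap_surjective_of_injective hinj ψ
  exact ⟨dualCoeffs χ, shiftOpL_dualCoeffs R χ⟩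

theorem continuous_shiftOpL {p n : ℕ} (R : Matrix (Fin p) (Fin n) ℝ[T;T⁻¹]) :
    Continuous (shiftOpL R) := by
  simp only [shiftOpL, LinearMap.coe_mk, AddHom.coe_mk, Finsupp.sum]
  fun_prop

namespace LinearMap

variable {R M M₂ : Type*} [Ring R] [AddCommGroup M] [Module R M] [AddCommGroup M₂] [Module R M₂]
  [TopologicalSpace M] [TopologicalSpace M₂] {f : M →ₗ[R] M₂}

theorem continuous_quotKerEquivOfSurjective (hc : Continuous f) (hf : Surjective f) :
    Continuous (f.quotKerEquivOfSurjective hf) :=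
  (Submodule.isQuotientMap_mkQ _).continuous_iff.mpr hc

theorem measurable_quotKerEquivOfSurjective_symm [PolishSpace M] [MeasurableSpace M]
    [BorelSpace M] [T0Space M₂] [SecondCountableTopology M₂] [MeasurableSpace M₂] [BorelSpace M₂]
    [MeasurableSpace (M ⧸ ker f)] [BorelSpace (M ⧸ ker f)] (hc : Continuous f)
    (hf : Surjective f) : Measurable (f.quotKerEquivOfSurjective hf).symm := by
  rw [← hc.measurable.measurable_comp_iff_of_surjective hf]
  have hcomp : (f.quotKerEquivOfSurjective hf).symm ∘ f = (ker f).mkQ := by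
    funext x
    rw [Function.comp_apply, LinearEquiv.symm_apply_eq, Submodule.mkQ_apply,
      quotKerEquivOfSurjective_apply_mk]
  rw [hcomp]
  exact (Submodule.isQuotientMap_mkQ _).continuous.measurable

end LinearMap

/-- If `R(z) ∈ ℝ[z,z⁻¹]^{m×n}` has full row normal rank `m`, then the map induced
by `R(σ)` on the quotient, `R̄ : (ℝⁿ)^ℤ / ker∞R → (ℝᵐ)^ℤ`, sending the coset of `w` to
`R(σ)w`, is a well-defined ℝ-linear continuous bijection which is moreover a Borel
isomorphism: both `R̄` and its inverse are measurable with respect to the Borel σ-algebras of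
the quotient topology on `(ℝⁿ)^ℤ / ker∞R` and of the product topology on `(ℝᵐ)^ℤ`. -/
theorem induced_quotient_map_is_borel_isomorphism (m n : ℕ)
    (R : Matrix (Fin m) (Fin n) (LaurentPolynomial ℝ))
    (hrk : normalRank R = m) :
    ∃ Rbar : ((ℤ → Fin n → ℝ) ⧸ LinearMap.ker (shiftOpL R)) →ₗ[ℝ] (ℤ → Fin m → ℝ),
      (∀ w : ℤ → Fin n → ℝ, Rbar (Submodule.Quotient.mk w) = shiftOpL R w) ∧
      Continuous Rbar ∧
      Function.Bijective Rbar ∧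
      @Measurable _ _ (borel ((ℤ → Fin n → ℝ) ⧸ LinearMap.ker (shiftOpL R)))
        (borel (ℤ → Fin m → ℝ)) Rbar ∧
      ∃ g : (ℤ → Fin m → ℝ) → ((ℤ → Fin n → ℝ) ⧸ LinearMap.ker (shiftOpL R)),
        Function.LeftInverse g Rbar ∧ Function.RightInverse g Rbar ∧
        @Measurable _ _ (borel (ℤ → Fin m → ℝ))
          (borel ((ℤ → Fin n → ℝ) ⧸ LinearMap.ker (shiftOpL R))) g := by
  have hsurj := shiftOpL_surjective R hrk
  have hc := continuous_shiftOpL R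
  let e := (shiftOpL R).quotKerEquivOfSurjective hsurj
  have he : Continuous e := LinearMap.continuous_quotKerEquivOfSurjective hc hsurj
  borelize ((ℤ → Fin n → ℝ) ⧸ LinearMap.ker (shiftOpL R))
  refine ⟨e, (shiftOpL R).quotKerEquivOfSurjective_apply_mk hsurj, he, e.bijective,
    he.borel_measurable, e.symm, e.symm_apply_apply, e.apply_symm_apply, ?_⟩
  rw [← BorelSpace.measurable_eq]
  exact LinearMap.measurable_quotKerEquivOfSurjective_symm hc hsurj
end

section
/- Let R₁ ∈ ℝ[z,z⁻¹]^{m×n} and R₂ ∈ ℝ[z,z⁻¹]^{p×n} be Laurent polynomial matrices such that the stacked operator w ↦ (R₁(σ)w, R₂(σ)w) from (ℝⁿ)^ℤ to (ℝᵐ)^ℤ × (ℝᵖ)^ℤ is surjective. Then: (a) for any nonempty sets E₁, E₂ ⊆ (ℝⁿ)^ℤ with E₁ saturated with respect to ker∞R₁ and E₂ saturated with respect to ker∞R₂, the intersection E₁ ∩ E₂ is nonempty; and (b) if E₁, E₁' are nonempty and saturated with respect to ker∞R₁, E₂, E₂' are nonempty and saturated with respect to ker∞R₂, and E₁ ∩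 E₂ = E₁' ∩ E₂', then E₁ = E₁' and E₂ = E₂'. -/
open Pointwise

/-!
Surjectivity of `w ↦ (R₁(σ)w, R₂(σ)w)` says exactly that `ker∞R₁ + ker∞R₂` is the whole
signal space: solving `R₁(σ)w = 0`, `R₂(σ)w = R₂(σ)x` splits `x = w + (x - w)`. Hence any two
points `x, y` have a common "meeting point" `u` with `u - x ∈ ker∞R₁` and `u - y ∈ ker∞R₂`.
Applied to points of `E₁` and `E₂` this gives (a); applied to `x ∈ E₁` and a point of `E₂` it
shows that a `ker∞R₁`-saturated set is recovered from its intersection with any nonempty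
`ker∞R₂`-saturated set, which gives (b).
-/

theorem AddSubgroup.exists_sub_mem_sub_mem_of_sup_eq_top {G : Type*} [AddCommGroup G]
    {K₁ K₂ : AddSubgroup G} (hK : K₁ ⊔ K₂ = ⊤) (x y : G) :
    ∃ u, u - x ∈ K₁ ∧ u - y ∈ K₂ := by
  obtain ⟨a, ha, b, hb, hab⟩ := AddSubgroup.mem_sup.mp (hK ▸ AddSubgroup.mem_top (y - x))
  refine ⟨x + a, by simpa using ha, ?_⟩
  have hy : y = x + a + b := by rw [add_assoc, hab]; abel
  subst hy
  simpa using hb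

def IsSaturated {G : Type*} [AddCommGroup G] (K : AddSubgroup G) (E : Set G) : Prop :=
  E + (K : Set G) = E

namespace IsSaturated

variable {G : Type*} [AddCommGroup G] {K K₁ K₂ : AddSubgroup G} {E E₁ E₁' E₂ E₂' : Set G}

theorem mem_of_sub_mem (hE : IsSaturated K E) {x y : G} (hx : x ∈ E) (hyx : y - x ∈ K) :
    y ∈ E := by
  have h := Set.add_mem_add hx hyx
  rwa [add_sub_cancel, show E + (K : Set G) = E from hE] at h

theorem inter_nonempty (hK : K₁ ⊔ K₂ = ⊤) (hE₁ : IsSaturated K₁ E₁) (hE₂ : IsSaturated K₂ E₂)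
    (hne₁ : E₁.Nonempty) (hne₂ : E₂.Nonempty) : (E₁ ∩ E₂).Nonempty := by
  obtain ⟨x, hx⟩ := hne₁
  obtain ⟨y, hy⟩ := hne₂
  obtain ⟨u, hux, huy⟩ := AddSubgroup.exists_sub_mem_sub_mem_of_sup_eq_top hK x y
  exact ⟨u, hE₁.mem_of_sub_mem hx hux, hE₂.mem_of_sub_mem hy huy⟩

theorem subset_of_inter_subset (hK : K₁ ⊔ K₂ = ⊤) (hE₁ : IsSaturated K₁ E₁)
    (hE₁' : IsSaturated K₁ E₁') (hE₂ : IsSaturated K₂ E₂) (hne₂ : E₂.Nonempty)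
    (hsub : E₁ ∩ E₂ ⊆ E₁') : E₁ ⊆ E₁' := by
  intro x hx
  obtain ⟨y, hy⟩ := hne₂
  obtain ⟨u, hux, huy⟩ := AddSubgroup.exists_sub_mem_sub_mem_of_sup_eq_top hK x y
  have hu : u ∈ E₁' := hsub ⟨hE₁.mem_of_sub_mem hx hux, hE₂.mem_of_sub_mem hy huy⟩
  exact hE₁'.mem_of_sub_mem hu ((AddSubgroup.sub_mem_comm_iff K₁).mp hux)

theorem eq_of_inter_eq (hK : K₁ ⊔ K₂ = ⊤) (hE₁ : IsSaturated K₁ E₁)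
    (hE₁' : IsSaturated K₁ E₁') (hE₂ : IsSaturated K₂ E₂) (hE₂' : IsSaturated K₂ E₂')
    (hne₂ : E₂.Nonempty) (hne₂' : E₂'.Nonempty) (h : E₁ ∩ E₂ = E₁' ∩ E₂') : E₁ = E₁' :=
  (hE₁.subset_of_inter_subset hK hE₁' hE₂ hne₂ (h ▸ Set.inter_subset_left)).antisymm
    (hE₁'.subset_of_inter_subset hK hE₁ hE₂' hne₂' (h ▸ Set.inter_subset_left))

end IsSaturated

theorem AddMonoidHom.ker_sup_ker_eq_top_of_surjective_prod {G M N : Type*} [AddCommGroup G]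
    [AddGroup M] [AddGroup N] (f : G →+ M) (g : G →+ N)
    (h : Function.Surjective fun x => (f x, g x)) : f.ker ⊔ g.ker = ⊤ := by
  refine eq_top_iff.mpr fun x _ => AddSubgroup.mem_sup.mpr ?_
  obtain ⟨w, hw⟩ := h (0, g x)
  have hfw : f w = 0 := congrArg Prod.fst hw
  have hgw : g w = g x := congrArg Prod.snd hw
  exact ⟨w, hfw, x - w, by simp [hgw], add_sub_cancel w x⟩

section shiftOp

variable {p n : ℕ} (R : Matrix (Fin p) (Fin n) (LaurentPolynomial ℝ))

theorem shiftOp_add (x y : ℤ → Fin n → ℝ) : shiftOp R (x + y) = shiftOp R x + shiftOp R y := by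
  funext t i
  simp only [shiftOp, Pi.add_apply, mul_add, Finsupp.sum_add, Finset.sum_add_distrib]

noncomputable def shiftOpHom : (ℤ → Fin n → ℝ) →+ (ℤ → Fin p → ℝ) :=
  AddMonoidHom.mk' (shiftOp R) (shiftOp_add R)

theorem isSaturated_ker_shiftOpHom_iff (E : Set (ℤ → Fin n → ℝ)) :
    IsSaturated (shiftOpHom R).ker E ↔ E + {w | shiftOp R w = 0} = E :=
  Iff.rfl

end shiftOp

/-- Let `R₁ ∈ ℝ[z,z⁻¹]^{m×n}` and `R₂ ∈ ℝ[z,z⁻¹]^{p×n}` be such that the stacked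
operator `w ↦ (R₁(σ)w, R₂(σ)w)` from `(ℝⁿ)^ℤ` to `(ℝᵐ)^ℤ × (ℝᵖ)^ℤ` is surjective. Then:
(a) for any nonempty sets `E₁, E₂ ⊆ (ℝⁿ)^ℤ` with `E₁` saturated with respect to `ker∞R₁`
(i.e. `E₁ + ker∞R₁ = E₁`) and `E₂` saturated with respect to `ker∞R₂`, the intersection
`E₁ ∩ E₂` is nonempty; and (b) if `E₁, E₁'` are nonempty and saturated w.r.t. `ker∞R₁`,
`E₂, E₂'` nonempty and saturated w.r.t. `ker∞R₂`, and `E₁ ∩ E₂ = E₁' ∩ E₂'`, then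
`E₁ = E₁'` and `E₂ = E₂'`. -/
theorem stacked_surjective_saturated_sets (m p n : ℕ)
    (R₁ : Matrix (Fin m) (Fin n) (LaurentPolynomial ℝ))
    (R₂ : Matrix (Fin p) (Fin n) (LaurentPolynomial ℝ))
    (hsurj : Function.Surjective
      (fun w : ℤ → Fin n → ℝ => (shiftOp R₁ w, shiftOp R₂ w))) :
    (∀ E₁ E₂ : Set (ℤ → Fin n → ℝ), E₁.Nonempty → E₂.Nonempty →
      E₁ + {w : ℤ → Fin n → ℝ | shiftOp R₁ w = 0} = E₁ →
      E₂ + {w : ℤ → Fin n → ℝ | shiftOp R₂ w = 0} = E₂ →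
      (E₁ ∩ E₂).Nonempty) ∧
    (∀ E₁ E₁' E₂ E₂' : Set (ℤ → Fin n → ℝ),
      E₁.Nonempty → E₁'.Nonempty → E₂.Nonempty → E₂'.Nonempty →
      E₁ + {w : ℤ → Fin n → ℝ | shiftOp R₁ w = 0} = E₁ →
      E₁' + {w : ℤ → Fin n → ℝ | shiftOp R₁ w = 0} = E₁' →
      E₂ + {w : ℤ → Fin n → ℝ | shiftOp R₂ w = 0} = E₂ →
      E₂' + {w : ℤ → Fin n → ℝ | shiftOp R₂ w = 0} = E₂' →
      E₁ ∩ E₂ = E₁' ∩ E₂' → E₁ = E₁' ∧ E₂ = E₂') := by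
  have hK : (shiftOpHom R₁).ker ⊔ (shiftOpHom R₂).ker = ⊤ :=
    AddMonoidHom.ker_sup_ker_eq_top_of_surjective_prod _ _ hsurj
  simp only [← isSaturated_ker_shiftOpHom_iff]
  refine ⟨fun E₁ E₂ hne₁ hne₂ hE₁ hE₂ => hE₁.inter_nonempty hK hE₂ hne₁ hne₂, ?_⟩
  intro E₁ E₁' E₂ E₂' hne₁ hne₁' hne₂ hne₂' hE₁ hE₁' hE₂ hE₂' h
  exact ⟨hE₁.eq_of_inter_eq hK hE₁' hE₂ hE₂' hne₂ hne₂' h,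
    hE₂.eq_of_inter_eq (sup_comm (shiftOpHom R₁).ker _ ▸ hK) hE₂' hE₁ hE₁' hne₁ hne₁'
      (by rw [Set.inter_comm, h, Set.inter_comm])⟩
end
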